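/- Fix x ∈ ℝ. Assume ∫ |u|³ |K(u)| du < ∞, ∫ |u|³ |K''(u)| du < ∞, ∫ K̃(u)² du < ∞; that u^j K(u) → 0 and u^j K'(u) → 0 as |u| → ∞ for j = 0, 1, 2, 3; and that f is bounded on ℝ and four times continuously differentiable in a neighborhood of x. If h_n = c n^{−1/7} for some constant c > 0, then the mean squared error of the bias-reduced kernel estimator satisfies E[(f̂ᵇ_{n,h_n}(x) − f(x))²] = O(n^{−6/7}) as n → ∞. -/

import Mathlib

/-!
The mean squared error is the variance plus the squared bias of `f̂ᵇ_{n,h}(x)`. The summands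
`K̃((x - Xᵢ)/h)` are i.i.d. and bounded, so the variance is at most `‖f‖_∞ ∫ K̃² / (n h)`.
Integrating by parts against the decay of `K` and `K'` gives `∫ K'' = ∫ u K'' = 0` and
`∫ u² K'' = 2`, so the correction term cancels the second moment of `K` and `K̃` has moments
`1, 0, 0`. Expanding `f` to second order at `x`, with a remainder that is `O(|y - x|³)` on all of
`ℝ` because `f` is bounded, the bias is `O(h³)`. For `h = c n^{-1/7}` both `1 / (n h)` and `h⁶`
are multiples of `n^{-6/7}`.
-/

open MeasureTheory ProbabilityTheory Filter Asymptotics Topology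

/-- The modified kernel `K̃(u) = K(u) − (1/2)(∫ v² K(v) dv) K''(u)`. -/
noncomputable def ktilde (K : ℝ → ℝ) (u : ℝ) : ℝ :=
  K u - 1 / 2 * (∫ v, v ^ 2 * K v) * deriv (deriv K) u

/-- The bias-reduced kernel density estimator
`f̂ᵇ_{n,h}(x) = (1/(nh)) Σ_{i<n} K̃((x - X_i)/h)`. -/
noncomputable def kdeb {Ω : Type*} (K : ℝ → ℝ) (X : ℕ → Ω → ℝ)
    (n : ℕ) (h x : ℝ) (ω : Ω) : ℝ :=
  (1 / (n * h)) * ∑ i ∈ Finset.range n, ktilde K ((x - X i ω) / h)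

open Set

theorem taylor_two_remainder_isBigO {f : ℝ → ℝ} {x : ℝ} (hf : ∃ s ∈ 𝓝 x, ContDiffOn ℝ 3 f s) :
    (fun y => f y - f x - deriv f x * (y - x) - deriv (deriv f) x / 2 * (y - x) ^ 2)
      =O[𝓝 x] fun y => (y - x) ^ 3 := by
  obtain ⟨s, hs, hfs⟩ := hf
  obtain ⟨ε, hε, hball⟩ := Metric.mem_nhds_iff.mp hs
  have hB : IsOpen (Metric.ball x ε) := Metric.isOpen_ball
  have hxB : x ∈ Metric.ball x ε := Metric.mem_ball_self hε
  have htaylor := taylor_isLittleO (convex_ball x ε) hxB (hfs.mono hball)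
  rw [hB.nhdsWithin_eq hxB] at htaylor
  have hd1 : derivWithin f (Metric.ball x ε) x = deriv f x := derivWithin_of_isOpen hB hxB
  have hd2 : iteratedDerivWithin 2 f (Metric.ball x ε) x = deriv (deriv f) x := by
    rw [iteratedDerivWithin_of_isOpen hB hxB, iteratedDeriv_succ, iteratedDeriv_one]
  -- `f - T₂ = (f - T₃) + f'''(x) / 6 • (y - x) ^ 3`
  refine (htaylor.isBigO.add ((isBigO_refl _ _).const_mul_left
    (iteratedDerivWithin 3 f (Metric.ball x ε) x / 6))).congr_left fun y => ?_
  simp [taylor_within_apply, hd1, hd2]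
  ring

theorem add_mul_add_mul_sq_le_mul_pow_three {r t A B C : ℝ} (hr : 0 < r) (hrt : r ≤ t)
    (hA : 0 ≤ A) (hB : 0 ≤ B) (hC : 0 ≤ C) :
    A + B * t + C * t ^ 2 ≤ (A / r ^ 3 + B / r ^ 2 + C / r) * t ^ 3 := by
  have hq : 1 ≤ t / r := (one_le_div hr).mpr hrt
  have ht : 0 ≤ t := hr.le.trans hrt
  calc A + B * t + C * t ^ 2
      ≤ A * (t / r) ^ 3 + B * t * (t / r) ^ 2 + C * t ^ 2 * (t / r) := by
        refine add_le_add (add_le_add ?_ ?_) ?_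
        · exact le_mul_of_one_le_right hA (one_le_pow₀ hq)
        · exact le_mul_of_one_le_right (by positivity) (one_le_pow₀ hq)
        · exact le_mul_of_one_le_right (by positivity) hq
    _ = (A / r ^ 3 + B / r ^ 2 + C / r) * t ^ 3 := by field_simp

theorem exists_abs_taylor_two_remainder_le {f : ℝ → ℝ} {x M : ℝ} (hfM : ∀ y, |f y| ≤ M)
    (hf : ∃ s ∈ 𝓝 x, ContDiffOn ℝ 3 f s) :
    ∃ D, ∀ y, |f y - f x - deriv f x * (y - x) - deriv (deriv f) x / 2 * (y - x) ^ 2|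
      ≤ D * |y - x| ^ 3 := by
  obtain ⟨C, hC⟩ := (taylor_two_remainder_isBigO hf).bound
  obtain ⟨r, hr, hnear⟩ := Metric.eventually_nhds_iff.mp hC
  have hM : 0 ≤ M := (abs_nonneg _).trans (hfM x)
  refine ⟨max C (2 * M / r ^ 3 + |deriv f x| / r ^ 2 + |deriv (deriv f) x| / 2 / r),
    fun y => ?_⟩
  rcases lt_or_ge |y - x| r with hy | hy
  · have := hnear (y := y) (by rwa [Real.dist_eq])
    simp only [Real.norm_eq_abs, abs_pow] at this
    exact this.trans (by gcongr; exact le_max_left _ _)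
  · -- far from `x` the remainder grows at most quadratically, hence is dominated by `|y - x| ^ 3`
    calc _ ≤ 2 * M + |deriv f x| * |y - x| + |deriv (deriv f) x| / 2 * |y - x| ^ 2 := by
          have h1 := abs_sub (f y - f x - deriv f x * (y - x))
            (deriv (deriv f) x / 2 * (y - x) ^ 2)
          have h2 := abs_sub (f y - f x) (deriv f x * (y - x))
          rw [abs_mul, abs_div, abs_pow, abs_two] at h1
          rw [abs_mul] at h2
          linarith [abs_sub (f y) (f x), hfM y, hfM x]
      _ ≤ _ := add_mul_add_mul_sq_le_mul_pow_three hr hy (by positivity) (abs_nonneg _)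
            (by positivity)
      _ ≤ _ := by gcongr; exact le_max_right _ _

theorem exists_abs_integral_mul_comp_sub_le {g f : ℝ → ℝ} {x M : ℝ} (hfm : Measurable f)
    (hfM : ∀ y, |f y| ≤ M) (hf : ∃ s ∈ 𝓝 x, ContDiffOn ℝ 3 f s)
    (hg0 : Integrable g) (hg1 : Integrable fun u => u * g u)
    (hg2 : Integrable fun u => u ^ 2 * g u) (hg3 : Integrable fun u => |u| ^ 3 * |g u|)
    (hm0 : ∫ u, g u = 1) (hm1 : ∫ u, u * g u = 0) (hm2 : ∫ u, u ^ 2 * g u = 0) :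
    ∃ C, ∀ h, |(∫ u, g u * f (x - h * u)) - f x| ≤ C * |h| ^ 3 := by
  set R : ℝ → ℝ :=
    fun y => f y - f x - deriv f x * (y - x) - deriv (deriv f) x / 2 * (y - x) ^ 2 with hR
  obtain ⟨D, hD⟩ := exists_abs_taylor_two_remainder_le hfM hf
  refine ⟨D * ∫ u, |u| ^ 3 * |g u|, fun h => ?_⟩
  have hfh : Measurable fun u => f (x - h * u) := by fun_prop
  have hlin : Integrable fun u => f x * g u - deriv f x * h * (u * g u) :=
    (hg0.const_mul _).sub (hg1.const_mul _)
  have hquad : Integrable fun u => f x * g u - deriv f x * h * (u * g u)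
      + deriv (deriv f) x * h ^ 2 / 2 * (u ^ 2 * g u) := hlin.add (hg2.const_mul _)
  have hpoly : ∫ u, (f x * g u - deriv f x * h * (u * g u)
      + deriv (deriv f) x * h ^ 2 / 2 * (u ^ 2 * g u)) = f x := by
    rw [integral_add hlin (hg2.const_mul _), integral_sub (hg0.const_mul _) (hg1.const_mul _),
      integral_const_mul, integral_const_mul, integral_const_mul, hm0, hm1, hm2]
    ring
  have hrem : (∫ u, g u * f (x - h * u)) - f x = ∫ u, g u * R (x - h * u) := by
    rw [← hpoly, ← integral_sub
      (hg0.mul_bdd hfh.aestronglyMeasurable (ae_of_all _ fun u => hfM _)) hquad]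
    congr 1 with u
    simp only [hR]
    ring
  have hbound : ∀ u, ‖g u * R (x - h * u)‖ ≤ D * |h| ^ 3 * (|u| ^ 3 * |g u|) := fun u => by
    calc ‖g u * R (x - h * u)‖ ≤ |g u| * (D * |x - h * u - x| ^ 3) := by
          rw [Real.norm_eq_abs, abs_mul]; gcongr; exact hD _
      _ = D * |h| ^ 3 * (|u| ^ 3 * |g u|) := by
          rw [show x - h * u - x = -(h * u) by ring, abs_neg, abs_mul]; ring
  calc |(∫ u, g u * f (x - h * u)) - f x|
      ≤ ∫ u, D * |h| ^ 3 * (|u| ^ 3 * |g u|) := by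
        rw [hrem, ← Real.norm_eq_abs]
        exact norm_integral_le_of_norm_le (hg3.const_mul _) (ae_of_all _ hbound)
    _ = D * (∫ u, |u| ^ 3 * |g u|) * |h| ^ 3 := by rw [integral_const_mul]; ring

theorem integrable_pow_mul_of_abs_le {φ : ℝ → ℝ} {M : ℝ} (hφ : AEStronglyMeasurable φ)
    (hM : ∀ u, |φ u| ≤ M) (h3 : Integrable fun u => |u| ^ 3 * |φ u|) {j : ℕ} (hj : j ≤ 3) :
    Integrable fun u => u ^ j * φ u := by
  have hdom : Integrable fun u => (Icc (-1 : ℝ) 1).indicator (fun _ => M) u + |u| ^ 3 * |φ u| :=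
    ((integrable_indicator_iff measurableSet_Icc).mpr
      (integrableOn_const measure_Icc_lt_top.ne enorm_ne_top)).add h3
  refine hdom.mono' ((continuous_pow j).aestronglyMeasurable.mul hφ) (ae_of_all _ fun u => ?_)
  rw [Real.norm_eq_abs, abs_mul, abs_pow]
  by_cases hu : |u| ≤ 1
  · rw [indicator_of_mem (show u ∈ Icc (-1 : ℝ) 1 from abs_le.mp hu)]
    have : |u| ^ j * |φ u| ≤ M := by
      simpa using mul_le_mul (pow_le_one₀ (abs_nonneg u) hu) (hM u) (abs_nonneg _) zero_le_one
    linarith [mul_nonneg (pow_nonneg (abs_nonneg u) 3) (abs_nonneg (φ u))]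
  · rw [indicator_of_notMem (show u ∉ Icc (-1 : ℝ) 1 from fun h => hu (abs_le.mpr h)), zero_add]
    gcongr
    exact le_of_lt (not_le.mp hu)

theorem integral_eq_zero_of_hasDerivAt_of_tendsto_cocompact {E : Type*} [NormedAddCommGroup E]
    [NormedSpace ℝ E] [CompleteSpace E] {F F' : ℝ → E} (hF : ∀ t, HasDerivAt F (F' t) t)
    (hF' : Integrable F') (hlim : Tendsto F (cocompact ℝ) (𝓝 0)) : ∫ t, F' t = 0 := by
  rw [cocompact_eq_atBot_atTop] at hlim
  simpa using integral_of_hasDerivAt_of_tendsto hF hF' (hlim.mono_left le_sup_left)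
    (hlim.mono_left le_sup_right)

section SecondDerivative

variable {K : ℝ → ℝ}

theorem ContDiff.hasDerivAt_deriv_deriv (hK : ContDiff ℝ 2 K) (t : ℝ) :
    HasDerivAt (deriv K) (deriv (deriv K) t) t :=
  ((hK.deriv' (n := 1)).differentiable one_ne_zero t).hasDerivAt

theorem ContDiff.continuous_deriv_deriv (hK : ContDiff ℝ 2 K) : Continuous (deriv (deriv K)) :=
  (hK.deriv' (n := 1)).continuous_deriv le_rfl

theorem integral_deriv_deriv_eq_zero (hK : ContDiff ℝ 2 K)
    (hint : Integrable (deriv (deriv K))) (hK' : Tendsto (deriv K) (cocompact ℝ) (𝓝 0)) :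
    ∫ u, deriv (deriv K) u = 0 :=
  integral_eq_zero_of_hasDerivAt_of_tendsto_cocompact hK.hasDerivAt_deriv_deriv hint hK'

theorem integral_mul_deriv_deriv_eq_zero (hK : ContDiff ℝ 2 K)
    (hint : Integrable fun u => u * deriv (deriv K) u) (hK0 : Tendsto K (cocompact ℝ) (𝓝 0))
    (hK'1 : Tendsto (fun u => u * deriv K u) (cocompact ℝ) (𝓝 0)) :
    ∫ u, u * deriv (deriv K) u = 0 := by
  refine integral_eq_zero_of_hasDerivAt_of_tendsto_cocompact (F := fun u => u * deriv K u - K u)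
    (fun t => ?_) hint (by simpa using hK'1.sub hK0)
  exact (((hasDerivAt_id t).mul (hK.hasDerivAt_deriv_deriv t)).sub
    (hK.differentiable two_ne_zero t).hasDerivAt).congr_deriv (by simp)

theorem integral_sq_mul_deriv_deriv (hK : ContDiff ℝ 2 K) (hKint : Integrable K)
    (hint : Integrable fun u => u ^ 2 * deriv (deriv K) u)
    (hK1 : Tendsto (fun u => u * K u) (cocompact ℝ) (𝓝 0))
    (hK'2 : Tendsto (fun u => u ^ 2 * deriv K u) (cocompact ℝ) (𝓝 0)) :
    ∫ u, u ^ 2 * deriv (deriv K) u = 2 * ∫ u, K u := by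
  have h := integral_eq_zero_of_hasDerivAt_of_tendsto_cocompact
    (F := fun u => u ^ 2 * deriv K u - 2 * (u * K u))
    (F' := fun u => u ^ 2 * deriv (deriv K) u - 2 * K u) (fun t => ?_)
    (hint.sub (hKint.const_mul 2)) (by simpa using hK'2.sub (hK1.const_mul 2))
  · rwa [integral_sub hint (hKint.const_mul 2), integral_const_mul, sub_eq_zero] at h
  · exact (((hasDerivAt_pow 2 t).mul (hK.hasDerivAt_deriv_deriv t)).sub
      (((hasDerivAt_id t).mul (hK.differentiable two_ne_zero t).hasDerivAt).const_mul 2)).congr_deriv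
        (by simp; ring)

end SecondDerivative

section ModifiedKernel

variable {K : ℝ → ℝ}

theorem pow_mul_ktilde (j : ℕ) (u : ℝ) :
    u ^ j * ktilde K u
      = u ^ j * K u - 1 / 2 * (∫ v, v ^ 2 * K v) * (u ^ j * deriv (deriv K) u) := by
  unfold ktilde
  ring

theorem integrable_pow_mul_ktilde {j : ℕ} (hK : Integrable fun u => u ^ j * K u)
    (hK'' : Integrable fun u => u ^ j * deriv (deriv K) u) :
    Integrable fun u => u ^ j * ktilde K u := by
  simp_rw [pow_mul_ktilde]
  exact hK.sub (hK''.const_mul _)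

theorem integral_pow_mul_ktilde {j : ℕ} (hK : Integrable fun u => u ^ j * K u)
    (hK'' : Integrable fun u => u ^ j * deriv (deriv K) u) :
    ∫ u, u ^ j * ktilde K u
      = (∫ u, u ^ j * K u) - 1 / 2 * (∫ v, v ^ 2 * K v) * ∫ u, u ^ j * deriv (deriv K) u := by
  simp_rw [pow_mul_ktilde]
  rw [integral_sub hK (hK''.const_mul _), integral_const_mul]

theorem ContDiff.continuous_ktilde (hK : ContDiff ℝ 2 K) : Continuous (ktilde K) :=
  hK.continuous.sub (continuous_const.mul hK.continuous_deriv_deriv)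

theorem abs_ktilde_le {MK M₂ : ℝ} (hKM : ∀ u, |K u| ≤ MK)
    (hK''M : ∀ u, |deriv (deriv K) u| ≤ M₂) (u : ℝ) :
    |ktilde K u| ≤ MK + |1 / 2 * ∫ v, v ^ 2 * K v| * M₂ := by
  unfold ktilde
  calc _ ≤ |K u| + |1 / 2 * ∫ v, v ^ 2 * K v| * |deriv (deriv K) u| := by
        rw [← abs_mul]; exact abs_sub _ _
    _ ≤ _ := by gcongr <;> simp only [hKM, hK''M]

theorem exists_abs_integral_ktilde_mul_comp_sub_le {f : ℝ → ℝ} {x MK M₂ Mf : ℝ}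
    (hK : ContDiff ℝ 2 K) (hKM : ∀ u, |K u| ≤ MK) (hK''M : ∀ u, |deriv (deriv K) u| ≤ M₂)
    (hKu3 : Integrable fun u => |u| ^ 3 * |K u|)
    (hK''u3 : Integrable fun u => |u| ^ 3 * |deriv (deriv K) u|)
    (hKone : ∫ u, K u = 1) (hKuzero : ∫ u, u * K u = 0)
    (hKdecay : ∀ j : ℕ, j ≤ 1 → Tendsto (fun u => u ^ j * K u) (cocompact ℝ) (𝓝 0))
    (hK'decay : ∀ j : ℕ, j ≤ 2 → Tendsto (fun u => u ^ j * deriv K u) (cocompact ℝ) (𝓝 0))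
    (hfm : Measurable f) (hfM : ∀ y, |f y| ≤ Mf) (hf : ∃ s ∈ 𝓝 x, ContDiffOn ℝ 3 f s) :
    ∃ C, ∀ h, |(∫ u, ktilde K u * f (x - h * u)) - f x| ≤ C * |h| ^ 3 := by
  have hKj : ∀ j ≤ 3, Integrable fun u => u ^ j * K u := fun j hj =>
    integrable_pow_mul_of_abs_le hK.continuous.aestronglyMeasurable hKM hKu3 hj
  have hK''j : ∀ j ≤ 3, Integrable fun u => u ^ j * deriv (deriv K) u := fun j hj =>
    integrable_pow_mul_of_abs_le hK.continuous_deriv_deriv.aestronglyMeasurable hK''M hK''u3 hj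
  have hKtj : ∀ j ≤ 3, Integrable fun u => u ^ j * ktilde K u := fun j hj =>
    integrable_pow_mul_ktilde (hKj j hj) (hK''j j hj)
  have hmoment : ∀ j ≤ 3, ∫ u, u ^ j * ktilde K u
      = (∫ u, u ^ j * K u) - 1 / 2 * (∫ v, v ^ 2 * K v) * ∫ u, u ^ j * deriv (deriv K) u :=
    fun j hj => integral_pow_mul_ktilde (hKj j hj) (hK''j j hj)
  have hK''0 : ∫ u, deriv (deriv K) u = 0 :=
    integral_deriv_deriv_eq_zero hK (by simpa using hK''j 0 (by norm_num))
      (by simpa using hK'decay 0 (by norm_num))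
  have hK''1 : ∫ u, u * deriv (deriv K) u = 0 :=
    integral_mul_deriv_deriv_eq_zero hK (by simpa using hK''j 1 (by norm_num))
      (by simpa using hKdecay 0 (by norm_num)) (by simpa using hK'decay 1 (by norm_num))
  have hK''2 : ∫ u, u ^ 2 * deriv (deriv K) u = 2 * ∫ u, K u :=
    integral_sq_mul_deriv_deriv hK (by simpa using hKj 0 (by norm_num)) (hK''j 2 (by norm_num))
      (by simpa using hKdecay 1 (by norm_num)) (hK'decay 2 (by norm_num))
  refine exists_abs_integral_mul_comp_sub_le hfm hfM hf (by simpa using hKtj 0 (by norm_num))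
    (by simpa using hKtj 1 (by norm_num)) (hKtj 2 (by norm_num))
    (by simpa [abs_mul] using (hKtj 3 le_rfl).abs) ?_ ?_ ?_
  · simpa [hKone, hK''0] using hmoment 0 (by norm_num)
  · simpa [hKuzero, hK''1] using hmoment 1 (by norm_num)
  · rw [hmoment 2 (by norm_num), hK''2, hKone]
    ring

end ModifiedKernel

theorem integral_eq_mul_integral_comp_sub_mul (Ψ : ℝ → ℝ) (x : ℝ) {h : ℝ} (hh : 0 < h) :
    ∫ y, Ψ y = h * ∫ u, Ψ (x - h * u) := by
  rw [Measure.integral_comp_mul_left (fun y => Ψ (x - y)) h,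
    integral_sub_left_eq_self Ψ volume x, abs_of_pos (inv_pos.mpr hh), smul_eq_mul,
    mul_inv_cancel_left₀ hh.ne']

theorem integral_sub_sq_eq_variance_add {Ω : Type*} [MeasurableSpace Ω] {P : Measure Ω}
    [IsProbabilityMeasure P] {W : Ω → ℝ} (hW : MemLp W 2 P) (a : ℝ) :
    ∫ ω, (W ω - a) ^ 2 ∂P = Var[W; P] + (P[W] - a) ^ 2 := by
  have h := variance_eq_sub (X := fun ω => W ω - a) (hW.sub (memLp_const a))
  rw [variance_sub_const hW.aestronglyMeasurable,
    integral_sub (hW.integrable one_le_two) (integrable_const a), integral_const] at h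
  simp only [Pi.pow_apply, probReal_univ, one_smul] at h
  linarith

-- `kdeb K` unfolds to `kde (ktilde K)`.
noncomputable def kde {Ω : Type*} (φ : ℝ → ℝ) (X : ℕ → Ω → ℝ) (n : ℕ) (h x : ℝ) (ω : Ω) : ℝ :=
  (1 / (n * h)) * ∑ i ∈ Finset.range n, φ ((x - X i ω) / h)

section KernelEstimator

variable {Ω : Type*} [MeasurableSpace Ω] {P : Measure Ω} {X : ℕ → Ω → ℝ} {f φ : ℝ → ℝ}

theorem integral_comp_sub_div_of_map_eq {Y : Ω → ℝ} (hY : Measurable Y) (hfm : Measurable f)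
    (hf0 : ∀ y, 0 ≤ f y) (hlaw : P.map Y = volume.withDensity fun y => ENNReal.ofReal (f y))
    (hφ : Measurable φ) (x : ℝ) {h : ℝ} (hh : 0 < h) :
    ∫ ω, φ ((x - Y ω) / h) ∂P = h * ∫ u, φ u * f (x - h * u) := by
  rw [← integral_map (f := fun y => φ ((x - y) / h)) hY.aemeasurable
      (hφ.comp (by fun_prop)).aestronglyMeasurable, hlaw,
    integral_withDensity_eq_integral_toReal_smul (by fun_prop)
      (ae_of_all _ fun _ => ENNReal.ofReal_lt_top),
    integral_eq_mul_integral_comp_sub_mul _ x hh]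
  congr 2 with u
  rw [ENNReal.toReal_ofReal (hf0 _), smul_eq_mul, mul_comm]
  congr 2
  field_simp
  ring

theorem memLp_kde [IsFiniteMeasure P] (hXm : ∀ i, Measurable (X i)) (hφ : Measurable φ) {M : ℝ}
    (hφM : ∀ u, |φ u| ≤ M) (n : ℕ) (h x : ℝ) : MemLp (kde φ X n h x) 2 P :=
  (memLp_finsetSum (f := fun i ω => φ ((x - X i ω) / h)) (Finset.range n) fun i _ =>
    MemLp.of_bound (hφ.comp (by fun_prop)).aestronglyMeasurable M
      (ae_of_all _ fun ω => hφM _)).const_mul (1 / (n * h))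

theorem integral_kde [IsProbabilityMeasure P] (hXm : ∀ i, Measurable (X i)) (hfm : Measurable f)
    (hf0 : ∀ y, 0 ≤ f y)
    (hlaw : ∀ i, P.map (X i) = volume.withDensity fun y => ENNReal.ofReal (f y))
    (hφ : Measurable φ) {M : ℝ} (hφM : ∀ u, |φ u| ≤ M) {n : ℕ} (hn : n ≠ 0) {h : ℝ} (hh : 0 < h)
    (x : ℝ) : P[kde φ X n h x] = ∫ u, φ u * f (x - h * u) := by
  unfold kde
  rw [integral_const_mul, integral_finsetSum (f := fun i ω => φ ((x - X i ω) / h)) _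
    fun i _ => Integrable.of_bound
    (hφ.comp (by fun_prop)).aestronglyMeasurable M (ae_of_all _ fun ω => hφM _)]
  simp_rw [integral_comp_sub_div_of_map_eq (hXm _) hfm hf0 (hlaw _) hφ x hh]
  rw [Finset.sum_const, Finset.card_range, nsmul_eq_mul]
  field_simp

theorem variance_kde_le [IsProbabilityMeasure P] (hXm : ∀ i, Measurable (X i))
    (hind : iIndepFun X P) (hfm : Measurable f) (hf0 : ∀ y, 0 ≤ f y)
    (hlaw : ∀ i, P.map (X i) = volume.withDensity fun y => ENNReal.ofReal (f y))
    {Mf : ℝ} (hfM : ∀ y, f y ≤ Mf) (hφ : Measurable φ) {M : ℝ} (hφM : ∀ u, |φ u| ≤ M)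
    (hφ2 : Integrable fun u => φ u ^ 2) (n : ℕ) {h : ℝ} (hh : 0 < h) (x : ℝ) :
    Var[kde φ X n h x; P] ≤ Mf * (∫ u, φ u ^ 2) / (n * h) := by
  set Y : ℕ → Ω → ℝ := fun i ω => φ ((x - X i ω) / h)
  have hψ : Measurable fun y => φ ((x - y) / h) := hφ.comp (by fun_prop)
  have hY : ∀ i, MemLp (Y i) 2 P := fun i =>
    MemLp.of_bound (hψ.comp (hXm i)).aestronglyMeasurable M (ae_of_all _ fun ω => hφM _)
  have hkde : kde φ X n h x = fun ω => 1 / (n * h) * (∑ i ∈ Finset.range n, Y i) ω := by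
    ext ω
    simp [kde, Y]
  have hY2 : ∀ i, P[Y i ^ 2] ≤ h * (Mf * ∫ u, φ u ^ 2) := fun i => by
    calc P[Y i ^ 2] = h * ∫ u, φ u ^ 2 * f (x - h * u) :=
          integral_comp_sub_div_of_map_eq (φ := fun u => φ u ^ 2) (hXm i) hfm hf0 (hlaw i)
            (hφ.pow_const 2) x hh
      _ ≤ h * ∫ u, Mf * φ u ^ 2 := by
          refine mul_le_mul_of_nonneg_left (integral_mono_of_nonneg (ae_of_all _ fun u => ?_)
            (hφ2.const_mul Mf) (ae_of_all _ fun u => ?_)) hh.le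
          · exact mul_nonneg (sq_nonneg _) (hf0 _)
          · simpa [mul_comm] using mul_le_mul_of_nonneg_left (hfM (x - h * u)) (sq_nonneg (φ u))
      _ = h * (Mf * ∫ u, φ u ^ 2) := by rw [integral_const_mul]
  calc Var[kde φ X n h x; P]
      = (1 / (n * h)) ^ 2 * ∑ i ∈ Finset.range n, Var[Y i; P] := by
        rw [hkde, variance_const_mul, IndepFun.variance_sum (fun i _ => hY i)
          fun i _ j _ hij => (hind.indepFun hij).comp hψ hψ]
    _ ≤ (1 / (n * h)) ^ 2 * ∑ i ∈ Finset.range n, h * (Mf * ∫ u, φ u ^ 2) := by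
        gcongr with i
        exact (variance_le_expectation_sq (hY i).aestronglyMeasurable).trans (hY2 i)
    _ = Mf * (∫ u, φ u ^ 2) / (n * h) := by
        rw [Finset.sum_const, Finset.card_range, nsmul_eq_mul]
        rcases eq_or_ne n 0 with rfl | hn
        · simp
        · field_simp

theorem integral_kde_sub_sq_le [IsProbabilityMeasure P] (hXm : ∀ i, Measurable (X i))
    (hind : iIndepFun X P) (hfm : Measurable f) (hf0 : ∀ y, 0 ≤ f y)
    (hlaw : ∀ i, P.map (X i) = volume.withDensity fun y => ENNReal.ofReal (f y))
    {Mf : ℝ} (hfM : ∀ y, f y ≤ Mf) (hφ : Measurable φ) {M : ℝ} (hφM : ∀ u, |φ u| ≤ M)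
    (hφ2 : Integrable fun u => φ u ^ 2) {n : ℕ} (hn : n ≠ 0) {h : ℝ} (hh : 0 < h) (x : ℝ) :
    ∫ ω, (kde φ X n h x ω - f x) ^ 2 ∂P
      ≤ Mf * (∫ u, φ u ^ 2) / (n * h) + ((∫ u, φ u * f (x - h * u)) - f x) ^ 2 := by
  rw [integral_sub_sq_eq_variance_add (memLp_kde hXm hφ hφM n h x),
    integral_kde hXm hfm hf0 hlaw hφ hφM hn hh x]
  gcongr
  exact variance_kde_le hXm hind hfm hf0 hlaw hfM hφ hφM hφ2 n hh x

end KernelEstimator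

theorem div_mul_rpow_neg_one_seventh_add_sq_eq (A C : ℝ) {c t : ℝ} (hc : 0 < c) (ht : 0 < t) :
    A / (t * (c * t ^ (-(1 : ℝ) / 7))) + (C * |c * t ^ (-(1 : ℝ) / 7)| ^ 3) ^ 2
      = (A / c + C ^ 2 * c ^ 6) * t ^ (-(6 : ℝ) / 7) := by
  set s := t ^ (-(1 : ℝ) / 7) with hs
  have hs0 : 0 < s := by positivity
  have hs6 : t ^ (-(6 : ℝ) / 7) = s ^ 6 := by
    rw [hs, ← Real.rpow_natCast, ← Real.rpow_mul ht.le]; norm_num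
  have hs7 : t = (s ^ 7)⁻¹ := by
    rw [hs, ← Real.rpow_natCast, ← Real.rpow_mul ht.le]; norm_num [Real.rpow_neg_one]
  rw [hs6, abs_of_pos (by positivity), hs7]
  field_simp

theorem mse_kdeb_general {Ω : Type*} [MeasurableSpace Ω] (P : Measure Ω) [IsProbabilityMeasure P]
    -- the i.i.d. sample with common density f
    (X : ℕ → Ω → ℝ) (hXmeas : ∀ i, Measurable (X i))
    (hXindep : iIndepFun X P)
    (f : ℝ → ℝ) (hfmeas : Measurable f) (hfnonneg : ∀ y, 0 ≤ f y)
    (hXlaw : ∀ i, Measure.map (X i) P = volume.withDensity fun y => ENNReal.ofReal (f y))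
    -- the kernel: twice continuously differentiable, K and K'' bounded and of
    -- bounded variation, ∫ K = 1, ∫ u K(u) du = 0, ∫ u² |K(u)| du < ∞
    (K : ℝ → ℝ) (hKC2 : ContDiff ℝ 2 K)
    (hKbdd : ∃ M, ∀ u, |K u| ≤ M) (hK''bdd : ∃ M, ∀ u, |deriv (deriv K) u| ≤ M)
    (hKone : (∫ u, K u) = 1)
    (hKuzero : (∫ u, u * K u) = 0)
    -- moment and square-integrability conditions:
    -- ∫ |u|³ |K(u)| du < ∞, ∫ |u|³ |K''(u)| du < ∞, ∫ K̃(u)² du < ∞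
    (hKu3int : Integrable (fun u => |u| ^ 3 * |K u|) volume)
    (hK''u3int : Integrable (fun u => |u| ^ 3 * |deriv (deriv K) u|) volume)
    (hKtsqint : Integrable (fun u => (ktilde K u) ^ 2) volume)
    -- decay: uʲ K(u) → 0 and uʲ K'(u) → 0 as |u| → ∞ for j = 0,1,2,3
    (hKdecay : ∀ j : ℕ, j ≤ 3 → Tendsto (fun u => u ^ j * K u) (cocompact ℝ) (𝓝 0))
    (hK'decay : ∀ j : ℕ, j ≤ 3 →
      Tendsto (fun u => u ^ j * deriv K u) (cocompact ℝ) (𝓝 0))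
    -- the point x, f bounded and four times continuously differentiable near x
    (x : ℝ) (hfbdd : ∃ M, ∀ y, |f y| ≤ M)
    (hfC4 : ∃ s ∈ 𝓝 x, ContDiffOn ℝ 4 f s)
    -- bandwidth h_n = c n^{-1/7}
    (c : ℝ) (hc : 0 < c)
    (h : ℕ → ℝ) (hdef : ∀ n, h n = c * (n : ℝ) ^ (-(1 : ℝ) / 7)) :
    (fun n : ℕ => ∫ ω, (kdeb K X n (h n) x ω - f x) ^ 2 ∂P)
      =O[atTop] (fun n : ℕ => (n : ℝ) ^ (-(6 : ℝ) / 7)) := by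
  obtain ⟨MK, hMK⟩ := hKbdd
  obtain ⟨M₂, hM₂⟩ := hK''bdd
  obtain ⟨Mf, hMf⟩ := hfbdd
  obtain ⟨C, hbias⟩ := exists_abs_integral_ktilde_mul_comp_sub_le hKC2 hMK hM₂ hKu3int
    hK''u3int hKone hKuzero (fun j hj => hKdecay j (by omega)) (fun j hj => hK'decay j (by omega))
    hfmeas hMf (by obtain ⟨s, hs, hf⟩ := hfC4; exact ⟨s, hs, hf.of_le (by norm_num)⟩)
  refine IsBigO.of_bound (Mf * (∫ u, ktilde K u ^ 2) / c + C ^ 2 * c ^ 6) ?_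
  filter_upwards [eventually_ne_atTop 0] with n hn
  have hn0 : (0 : ℝ) < n := by positivity
  have hh : 0 < h n := by rw [hdef]; positivity
  rw [Real.norm_of_nonneg (integral_nonneg fun _ => sq_nonneg _),
    Real.norm_of_nonneg (by positivity), ← div_mul_rpow_neg_one_seventh_add_sq_eq _ _ hc hn0,
    ← hdef]
  calc ∫ ω, (kdeb K X n (h n) x ω - f x) ^ 2 ∂P
      ≤ Mf * (∫ u, ktilde K u ^ 2) / (n * h n)
        + ((∫ u, ktilde K u * f (x - h n * u)) - f x) ^ 2 :=
        integral_kde_sub_sq_le hXmeas hXindep hfmeas hfnonneg hXlaw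
          (fun y => (le_abs_self _).trans (hMf y)) hKC2.continuous_ktilde.measurable
          (abs_ktilde_le hMK hM₂) hKtsqint hn hh x
    _ ≤ Mf * (∫ u, ktilde K u ^ 2) / (n * h n) + (C * |h n| ^ 3) ^ 2 :=
        add_le_add_right ((sq_abs _).symm.trans_le
          (pow_le_pow_left₀ (abs_nonneg _) (hbias (h n)) 2)) _

/-- with `h_n = c n^{-1/7}`,
`E[(f̂ᵇ_{n,h_n}(x) − f(x))²] = O(n^{-6/7})` as `n → ∞`. -/
theorem mse_kdeb {Ω : Type*} [MeasurableSpace Ω] (P : Measure Ω) [IsProbabilityMeasure P]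
    -- the i.i.d. sample with common density f
    (X : ℕ → Ω → ℝ) (hXmeas : ∀ i, Measurable (X i))
    (hXindep : iIndepFun X P)
    (f : ℝ → ℝ) (hfmeas : Measurable f) (hfnonneg : ∀ y, 0 ≤ f y)
    (hXlaw : ∀ i, Measure.map (X i) P = volume.withDensity fun y => ENNReal.ofReal (f y))
    -- the kernel: twice continuously differentiable, K and K'' bounded and of
    -- bounded variation, ∫ K = 1, ∫ u K(u) du = 0, ∫ u² |K(u)| du < ∞
    (K : ℝ → ℝ) (hKC2 : ContDiff ℝ 2 K)
    (hKbdd : ∃ M, ∀ u, |K u| ≤ M) (hK''bdd : ∃ M, ∀ u, |deriv (deriv K) u| ≤ M)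
    (hKbv : BoundedVariationOn K Set.univ)
    (hK''bv : BoundedVariationOn (deriv (deriv K)) Set.univ)
    (hKint : Integrable K volume) (hKone : (∫ u, K u) = 1)
    (hKuint : Integrable (fun u => u * K u) volume) (hKuzero : (∫ u, u * K u) = 0)
    (hKu2int : Integrable (fun u => u ^ 2 * |K u|) volume)
    -- moment and square-integrability conditions:
    -- ∫ |u|³ |K(u)| du < ∞, ∫ |u|³ |K''(u)| du < ∞, ∫ K̃(u)² du < ∞
    (hKu3int : Integrable (fun u => |u| ^ 3 * |K u|) volume)
    (hK''u3int : Integrable (fun u => |u| ^ 3 * |deriv (deriv K) u|) volume)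
    (hKtsqint : Integrable (fun u => (ktilde K u) ^ 2) volume)
    -- decay: uʲ K(u) → 0 and uʲ K'(u) → 0 as |u| → ∞ for j = 0,1,2,3
    (hKdecay : ∀ j : ℕ, j ≤ 3 → Tendsto (fun u => u ^ j * K u) (cocompact ℝ) (𝓝 0))
    (hK'decay : ∀ j : ℕ, j ≤ 3 →
      Tendsto (fun u => u ^ j * deriv K u) (cocompact ℝ) (𝓝 0))
    -- the point x, f bounded and four times continuously differentiable near x
    (x : ℝ) (hfbdd : ∃ M, ∀ y, |f y| ≤ M)
    (hfC4 : ∃ s ∈ 𝓝 x, ContDiffOn ℝ 4 f s)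
    -- bandwidth h_n = c n^{-1/7}
    (c : ℝ) (hc : 0 < c)
    (h : ℕ → ℝ) (hdef : ∀ n, h n = c * (n : ℝ) ^ (-(1 : ℝ) / 7)) :
    (fun n : ℕ => ∫ ω, (kdeb K X n (h n) x ω - f x) ^ 2 ∂P)
      =O[atTop] (fun n : ℕ => (n : ℝ) ^ (-(6 : ℝ) / 7)) :=
  mse_kdeb_general P X hXmeas hXindep f hfmeas hfnonneg hXlaw K hKC2 hKbdd hK''bdd hKone hKuzero
    hKu3int hK''u3int hKtsqint hKdecay hK'decay x hfbdd hfC4 c hc h hdef
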